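/- arXiv:1707.08346 — 2 statements merged into one kernel-verified Lean document; each statement's English description precedes it below -/
import Mathlib

section
/- Let K ⊆ K' be an algebraically pure field extension with K ℵ₀-complete, x = (x₁,...,xₙ), and f ∈ K[[x]][Y]^r with Y = (Y₁,...,Y_m). Suppose there exists ŷ ∈ K'[[x]]^m with f(ŷ) = 0 and ŷ_i ∈ K'[[x_{J_i}]] for subsets J_i ⊆ {1,...,n}. Then there exists y ∈ K[[x]]^m with f(y) = 0, y_i ∈ K[[x_{J_i}]], and ord(y_i) = ord(ŷ_i) for all i ∈ {1,...,m}. -/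
/-- A field `K` is ℵ₀-complete if every countable system of polynomial equations over `K`
(in countably many indeterminates) has a solution in `K` whenever every finite
sub-system has a solution in `K`. -/
def Aleph0Complete (K : Type*) [Field K] : Prop :=
  ∀ S : ℕ → MvPolynomial ℕ K,
    (∀ T : Finset ℕ, ∃ x : ℕ → K, ∀ N ∈ T, MvPolynomial.eval x (S N) = 0) →
    ∃ x : ℕ → K, ∀ N : ℕ, MvPolynomial.eval x (S N) = 0

/-- A morphism of fields `φ : K →+* L` is algebraically pure if every finite system of
polynomial equations with coefficients in `K` having a solution in `L` has a solution in `K`. -/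
def AlgebraicallyPure {K L : Type*} [Field K] [Field L] (φ : K →+* L) : Prop :=
  ∀ (m r : ℕ) (f : Fin r → MvPolynomial (Fin m) K),
    (∃ y : Fin m → L, ∀ k, MvPolynomial.eval y (MvPolynomial.map φ (f k)) = 0) →
    ∃ y : Fin m → K, ∀ k, MvPolynomial.eval y (f k) = 0

/-- `g ∈ K[[x_J]]`: the power series `g` only involves the variables `x_j` for `j ∈ J`. -/
def DependsOnVars {K : Type*} [Field K] {n : ℕ} (J : Set (Fin n)) (g : MvPowerSeries (Fin n) K) : Prop :=
  ∀ α : Fin n →₀ ℕ, ¬ (↑α.support ⊆ J) → MvPowerSeries.coeff α g = 0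

/-- `OrdGE g c` means `ord g ≥ c`, i.e. `g ∈ (x)^c`. -/
def OrdGE {K : Type*} [Field K] {n : ℕ} (g : MvPowerSeries (Fin n) K) (c : ℕ) : Prop :=
  ∀ α : Fin n →₀ ℕ, (∑ j, α j) < c → MvPowerSeries.coeff α g = 0

/-- `OrdEq g c` means `ord g = c` exactly. -/
def OrdEq {K : Type*} [Field K] {n : ℕ} (g : MvPowerSeries (Fin n) K) (c : ℕ) : Prop :=
  OrdGE g c ∧ ¬ OrdGE g (c + 1)


/-!
The coefficients of `f(y)` are polynomials over `K` in the coefficients of `y`, so a solution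
with the required properties is the same as a solution in `K` of a countable polynomial system
in the coefficients of `y`: the constraints `y i ∈ K[[x_{J i}]]` and `ord (y i) ≥ ord (yh i)` ask
certain coefficients to vanish, and `ord (y i) ≤ ord (yh i)` asks one coefficient of degree
`ord (yh i)` to be invertible. The coefficients of `yh` solve this system in `K'`. A finite
subsystem involves only finitely many unknowns, so purity solves it in `K`, and
`ℵ₀`-completeness then solves the whole system in `K`.
-/

open MvPolynomial

section Descent

variable {K K' : Type*} [Field K] [Field K'] {φ : K →+* K'}

theorem AlgebraicallyPure.exists_eval_eq_zero_of_finite (hpure : AlgebraicallyPure φ)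
    {ι s : Type*} [Finite ι] [Finite s] (F : s → MvPolynomial ι K) (x' : ι → K')
    (hx' : ∀ k, eval x' (map φ (F k)) = 0) : ∃ x : ι → K, ∀ k, eval x (F k) = 0 := by
  obtain ⟨m, ⟨eι⟩⟩ := Finite.exists_equiv_fin ι
  obtain ⟨r, ⟨es⟩⟩ := Finite.exists_equiv_fin s
  obtain ⟨y, hy⟩ := hpure m r (fun k => rename eι (F (es.symm k)))
    ⟨x' ∘ eι.symm, fun k => by simpa [map_rename, eval_rename, Function.comp_def] using hx' _⟩
  exact ⟨y ∘ eι, fun k => by simpa [eval_rename] using hy (es k)⟩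

theorem AlgebraicallyPure.exists_eval_eq_zero_of_finset (hpure : AlgebraicallyPure φ)
    {ι : Type*} (t : Finset (MvPolynomial ι K)) (x' : ι → K')
    (hx' : ∀ p ∈ t, eval x' (map φ p) = 0) : ∃ x : ι → K, ∀ p ∈ t, eval x p = 0 := by
  classical
  have hrename : ∀ p : t, ∃ q : MvPolynomial (t.biUnion vars) K, rename Subtype.val q = p :=
    fun p => exists_rename_eq_of_vars_subset_range _ _ Subtype.val_injective
      fun i hi => ⟨⟨i, Finset.mem_biUnion.2 ⟨p, p.2, hi⟩⟩, rfl⟩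
  choose q hq using hrename
  obtain ⟨z, hz⟩ := hpure.exists_eval_eq_zero_of_finite q (x' ∘ Subtype.val)
    fun p => by simpa [← hq p, map_rename, eval_rename] using hx' p p.2
  refine ⟨Function.extend Subtype.val z 0, fun p hp => ?_⟩
  have hp' : rename Subtype.val (q ⟨p, hp⟩) = p := hq ⟨p, hp⟩
  rw [← hp', eval_rename, Function.extend_comp Subtype.val_injective]
  exact hz _

theorem Aleph0Complete.exists_eval_eq_zero (hK : Aleph0Complete K) {ι : Type*} [Countable ι]
    {S : Set (MvPolynomial ι K)} (hS : S.Countable)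
    (hfin : ∀ t : Finset (MvPolynomial ι K), ↑t ⊆ S → ∃ x : ι → K, ∀ p ∈ t, eval x p = 0) :
    ∃ x : ι → K, ∀ p ∈ S, eval x p = 0 := by
  classical
  rcases S.eq_empty_or_nonempty with rfl | hne
  · exact ⟨0, by simp⟩
  obtain ⟨g, rfl⟩ := hS.exists_eq_range hne
  obtain ⟨e, he⟩ := Countable.exists_injective_nat ι
  obtain ⟨z, hz⟩ := hK (fun N => rename e (g N)) fun T => by
    obtain ⟨x, hx⟩ := hfin (T.image g) (by simp)
    refine ⟨Function.extend e x 0, fun N hN => ?_⟩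
    rw [eval_rename, Function.extend_comp he]
    exact hx _ (Finset.mem_image_of_mem g hN)
  refine ⟨z ∘ e, ?_⟩
  rintro _ ⟨N, rfl⟩
  simpa [eval_rename] using hz N

theorem exists_eval_eq_zero_of_countable (hpure : AlgebraicallyPure φ) (hK : Aleph0Complete K)
    {ι : Type*} [Countable ι] {S : Set (MvPolynomial ι K)} (hS : S.Countable) (x' : ι → K')
    (hx' : ∀ p ∈ S, eval x' (map φ p) = 0) : ∃ x : ι → K, ∀ p ∈ S, eval x p = 0 :=
  hK.exists_eval_eq_zero hS fun t ht =>
    hpure.exists_eval_eq_zero_of_finset t x' fun p hp => hx' p (ht hp)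

end Descent

namespace MvPowerSeries

variable {σ ι R S : Type*}

def ofCoeffs (c : ι × (σ →₀ ℕ) → R) (i : ι) : MvPowerSeries σ R := fun α => c (i, α)

@[simp]
theorem coeff_ofCoeffs [Semiring R] (c : ι × (σ →₀ ℕ) → R) (i : ι) (α : σ →₀ ℕ) :
    coeff α (ofCoeffs c i) = c (i, α) := rfl

theorem ofCoeffs_coeff [Semiring R] (y : ι → MvPowerSeries σ R) :
    ofCoeffs (fun v : ι × (σ →₀ ℕ) => coeff v.2 (y v.1)) = y := rfl

noncomputable def leadingExponent [Semiring R] (g : MvPowerSeries σ R) : σ →₀ ℕ :=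
  Classical.epsilon fun d => coeff d g ≠ 0 ∧ (d.degree : ℕ∞) = g.order

theorem coeff_leadingExponent_ne_zero_and_degree [Semiring R] {g : MvPowerSeries σ R}
    (hg : g ≠ 0) :
    coeff (leadingExponent g) g ≠ 0 ∧ ((leadingExponent g).degree : ℕ∞) = g.order :=
  Classical.epsilon_spec (exists_coeff_ne_zero_and_order (ne_zero_iff_order_finite.1 hg))

variable [CommSemiring R] [CommSemiring S]

/-- `ofCoeffs X` is the generic family of series, with an indeterminate for every coefficient. -/
noncomputable def universalCoeff (f : MvPolynomial ι (MvPowerSeries σ R)) (α : σ →₀ ℕ) :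
    MvPolynomial (ι × (σ →₀ ℕ)) R :=
  coeff α (MvPolynomial.eval (ofCoeffs MvPolynomial.X) (MvPolynomial.map (map MvPolynomial.C) f))

theorem eval_map_universalCoeff (φ : R →+* S) (c : ι × (σ →₀ ℕ) → S)
    (f : MvPolynomial ι (MvPowerSeries σ R)) (α : σ →₀ ℕ) :
    MvPolynomial.eval c (MvPolynomial.map φ (universalCoeff f α)) =
      coeff α (MvPolynomial.eval (ofCoeffs c) (MvPolynomial.map (map φ) f)) := by
  set ψ := (MvPolynomial.eval c).comp (MvPolynomial.map φ)
  have hψC : ψ.comp MvPolynomial.C = φ := by ext; simp [ψ]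
  have hψX : map ψ ∘ ofCoeffs MvPolynomial.X = ofCoeffs c := by
    funext i; ext α; simp [ψ]
  change ψ (universalCoeff f α) = _
  rw [universalCoeff, ← coeff_map, MvPolynomial.eval_map, MvPolynomial.eval_map,
    eval₂_comp_left, ← map_comp, hψC, hψX]

theorem eval_universalCoeff (c : ι × (σ →₀ ℕ) → R) (f : MvPolynomial ι (MvPowerSeries σ R))
    (α : σ →₀ ℕ) :
    MvPolynomial.eval c (universalCoeff f α) = coeff α (MvPolynomial.eval (ofCoeffs c) f) := by
  simpa [MvPolynomial.map_id, map_id] using eval_map_universalCoeff (RingHom.id R) c f α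

end MvPowerSeries

theorem ordGE_iff_le_order {K : Type*} [Field K] {n : ℕ} (g : MvPowerSeries (Fin n) K) (c : ℕ) :
    OrdGE g c ↔ (c : ℕ∞) ≤ g.order := by
  simp only [OrdGE, ← Finsupp.degree_eq_sum]
  refine ⟨fun h => MvPowerSeries.nat_le_order h, fun h α hα => ?_⟩
  exact MvPowerSeries.coeff_of_lt_order (lt_of_lt_of_le (by exact_mod_cast hα) h)

section DescentSystem

open MvPowerSeries (coeff universalCoeff leadingExponent ofCoeffs)

variable {K K' : Type*} [Field K] [Field K'] {n : ℕ} {ι ρ : Type*}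

/-- `Sum.inl (i, α)` is the coefficient of `x^α` in `y i`; `Sum.inr i` is an inverse of the
coefficient of `y i` at `leadingExponent (yh i)`. -/
abbrev DescentVar (n : ℕ) (ι : Type*) := (ι × (Fin n →₀ ℕ)) ⊕ ι

def descentSystem (f : ρ → MvPolynomial ι (MvPowerSeries (Fin n) K)) (J : ι → Set (Fin n))
    (yh : ι → MvPowerSeries (Fin n) K') : Set (MvPolynomial (DescentVar n ι) K) :=
  Set.range (fun kα : ρ × (Fin n →₀ ℕ) => rename Sum.inl (universalCoeff (f kα.1) kα.2)) ∪
    (fun iα => X (Sum.inl iα)) ''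
      {iα | ¬ ↑iα.2.support ⊆ J iα.1 ∨ (iα.2.degree : ℕ∞) < (yh iα.1).order} ∪
    (fun i => X (Sum.inl (i, leadingExponent (yh i))) * X (Sum.inr i) - 1) '' {i | yh i ≠ 0}

theorem descentSystem_countable [Countable ι] [Countable ρ]
    (f : ρ → MvPolynomial ι (MvPowerSeries (Fin n) K)) (J : ι → Set (Fin n))
    (yh : ι → MvPowerSeries (Fin n) K') : (descentSystem f J yh).Countable :=
  ((Set.countable_range _).union ((Set.to_countable _).image _)).union
    ((Set.to_countable _).image _)

noncomputable def descentPoint (yh : ι → MvPowerSeries (Fin n) K') : DescentVar n ι → K' :=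
  Sum.elim (fun iα => coeff iα.2 (yh iα.1)) fun i => (coeff (leadingExponent (yh i)) (yh i))⁻¹

variable {f : ρ → MvPolynomial ι (MvPowerSeries (Fin n) K)} {J : ι → Set (Fin n)}
  {yh : ι → MvPowerSeries (Fin n) K'} {x : DescentVar n ι → K}

theorem eval_descentPoint_map_eq_zero {φ : K →+* K'}
    (hsol : ∀ k, eval yh (map (MvPowerSeries.map φ) (f k)) = 0)
    (hcon : ∀ i, DependsOnVars (J i) (yh i)) {p : MvPolynomial (DescentVar n ι) K}
    (hp : p ∈ descentSystem f J yh) : eval (descentPoint yh) (map φ p) = 0 := by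
  rcases hp with (⟨⟨k, α⟩, rfl⟩ | ⟨⟨i, α⟩, hiα, rfl⟩) | ⟨i, hi, rfl⟩
  · rw [map_rename, eval_rename, MvPowerSeries.eval_map_universalCoeff]
    simp [descentPoint, Function.comp_def, MvPowerSeries.ofCoeffs_coeff, hsol]
  · simp only [map_X, eval_X, descentPoint, Sum.elim_inl]
    exact hiα.elim (hcon i α) MvPowerSeries.coeff_of_lt_order
  · simp [descentPoint, (MvPowerSeries.coeff_leadingExponent_ne_zero_and_degree hi).1]

theorem eval_ofCoeffs_eq_zero_of_descentSystem (hx : ∀ p ∈ descentSystem f J yh, eval x p = 0)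
    (k : ρ) : eval (ofCoeffs (x ∘ Sum.inl)) (f k) = 0 := by
  ext α
  rw [← MvPowerSeries.eval_universalCoeff, map_zero, ← eval_rename]
  exact hx _ (Or.inl (Or.inl ⟨(k, α), rfl⟩))

theorem dependsOnVars_ofCoeffs_of_descentSystem
    (hx : ∀ p ∈ descentSystem f J yh, eval x p = 0) (i : ι) :
    DependsOnVars (J i) (ofCoeffs (x ∘ Sum.inl) i) := fun α hα => by
  simpa using hx _ (Or.inl (Or.inr ⟨(i, α), Or.inl hα, rfl⟩))

theorem order_ofCoeffs_of_descentSystem (hx : ∀ p ∈ descentSystem f J yh, eval x p = 0)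
    (i : ι) : (ofCoeffs (x ∘ Sum.inl) i).order = (yh i).order := by
  refine le_antisymm ?_ (MvPowerSeries.le_order fun d hd => ?_)
  · rcases eq_or_ne (yh i) 0 with hi | hi
    · simp [hi]
    rw [← (MvPowerSeries.coeff_leadingExponent_ne_zero_and_degree hi).2]
    have hunit : x (Sum.inl (i, leadingExponent (yh i))) * x (Sum.inr i) = 1 := by
      simpa [sub_eq_zero] using hx _ (Or.inr ⟨i, hi, rfl⟩)
    exact MvPowerSeries.order_le (left_ne_zero_of_mul_eq_one hunit)
  · simpa using hx _ (Or.inl (Or.inr ⟨(i, d), Or.inr hd, rfl⟩))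

end DescentSystem

/-- Approximation over an algebraically pure extension: a solution over `K'[[x]]` with
constraints descends to a solution over `K[[x]]` with the same constraints and the same
orders, when `K → K'` is algebraically pure and `K` is ℵ₀-complete. -/
theorem approximation_algebraically_pure {K K' : Type*} [Field K] [Field K'] (φ : K →+* K')
    (hpure : AlgebraicallyPure φ) (hK : Aleph0Complete K)
    (n m r : ℕ) (f : Fin r → MvPolynomial (Fin m) (MvPowerSeries (Fin n) K))
    (J : Fin m → Set (Fin n)) (yh : Fin m → MvPowerSeries (Fin n) K')
    (hsol : ∀ k, MvPolynomial.eval yh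
      (MvPolynomial.map (MvPowerSeries.map φ) (f k)) = 0)
    (hcon : ∀ i, DependsOnVars (J i) (yh i)) :
    ∃ y : Fin m → MvPowerSeries (Fin n) K,
      (∀ k, MvPolynomial.eval y (f k) = 0) ∧
      (∀ i, DependsOnVars (J i) (y i)) ∧
      (∀ i (c : ℕ), OrdGE (y i) c ↔ OrdGE (yh i) c) := by
  obtain ⟨x, hx⟩ := exists_eval_eq_zero_of_countable hpure hK (descentSystem_countable f J yh)
    (descentPoint yh) fun p hp => eval_descentPoint_map_eq_zero hsol hcon hp
  refine ⟨MvPowerSeries.ofCoeffs (x ∘ Sum.inl), eval_ofCoeffs_eq_zero_of_descentSystem hx,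
    dependsOnVars_ofCoeffs_of_descentSystem hx, fun i c => ?_⟩
  rw [ordGE_iff_le_order, ordGE_iff_le_order, order_ofCoeffs_of_descentSystem hx]
end

section
/- Strong approximation with constraints: Let K be an ℵ₀-complete field, x = (x₁,...,xₙ), f ∈ K[[x]][Y]^r with Y = (Y₁,...,Y_m), and J_i ⊆ {1,...,n} for i ∈ {1,...,m}. Then there exists a map ν : ℕ^m → ℕ such that for every c = (c₁,...,c_m) ∈ ℕ^m: if y' = (y'₁,...,y'_m) with y'_i ∈ K[[x_{J_i}]] satisfies f(y') ≡ 0 modulo (x)^{ν(c)} and ord(y'_i) = c_i for all i, then there exists y = (y₁,...,y_m) with y_i ∈ K[[x_{J_i}]], f(y) = 0, and ord(y_i) = c_i for all i. -/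
open MvPolynomial

theorem Aleph0Complete.exists_forall_eval_eq_zero {K : Type*} [Field K] (hK : Aleph0Complete K)
    {ι E : Type*} [Countable ι] [Countable E] (S : E → MvPolynomial ι K)
    (hS : ∀ T : Finset E, ∃ x : ι → K, ∀ e ∈ T, eval x (S e) = 0) :
    ∃ x : ι → K, ∀ e, eval x (S e) = 0 := by
  obtain ⟨i, hi⟩ := Countable.exists_injective_nat ι
  obtain ⟨j, hj⟩ := Countable.exists_injective_nat E
  let S' : ℕ → MvPolynomial ℕ K := Function.extend j (fun e => rename i (S e)) 0
  have hS' (e : E) : S' (j e) = rename i (S e) := hj.extend_apply _ _ e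
  obtain ⟨x, hx⟩ := hK S' fun T => by
    obtain ⟨x, hx⟩ := hS (T.preimage j hj.injOn)
    refine ⟨Function.extend i x 0, fun N hN => ?_⟩
    by_cases hNj : ∃ e, j e = N
    · obtain ⟨e, rfl⟩ := hNj
      rw [hS', eval_rename, Function.extend_comp hi]
      exact hx e (Finset.mem_preimage.2 hN)
    · simp [S', Function.extend_apply' _ _ _ hNj]
  exact ⟨x ∘ i, fun e => by simpa [hS', eval_rename] using hx (j e)⟩

theorem Aleph0Complete.exists_level_solvable_imp_solvable {K : Type*} [Field K]
    (hK : Aleph0Complete K) {ι E : Type*} [Countable ι] [Countable E]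
    (S : E → MvPolynomial ι K) (w : E → ℕ) :
    ∃ N, (∃ x : ι → K, ∀ e, w e < N → eval x (S e) = 0) → ∃ x : ι → K, ∀ e, eval x (S e) = 0 := by
  by_contra! h
  obtain ⟨x, hx⟩ := hK.exists_forall_eval_eq_zero S fun T =>
    (h (T.sup w + 1)).1.imp fun _ hx e he => hx e (Nat.lt_succ_of_le (Finset.le_sup he))
  obtain ⟨e, he⟩ := (h 0).2 x
  exact he (hx e)

theorem ordEq_iff {K : Type*} [Field K] {n : ℕ} {g : MvPowerSeries (Fin n) K} {c : ℕ} :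
    OrdEq g c ↔ OrdGE g c ∧ ∃ α : Fin n →₀ ℕ, ∑ j, α j = c ∧ MvPowerSeries.coeff α g ≠ 0 := by
  refine ⟨fun ⟨hge, hlt⟩ => ⟨hge, ?_⟩,
    fun ⟨hge, α, hα, hne⟩ => ⟨hge, fun h => hne (h α (by omega))⟩⟩
  obtain ⟨α, hα, hne⟩ : ∃ α : Fin n →₀ ℕ, ∑ j, α j < c + 1 ∧ MvPowerSeries.coeff α g ≠ 0 := by
    simpa [OrdGE] using hlt
  exact ⟨α, by have := mt (hge α) hne; omega, hne⟩

namespace StrongApproximation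

section CoeffPoly

variable {σ τ R : Type*} [CommSemiring R]

def ofCoeffs (u : τ × (σ →₀ ℕ) → R) (i : τ) : MvPowerSeries σ R := fun α => u (i, α)

theorem coeff_ofCoeffs (u : τ × (σ →₀ ℕ) → R) (i : τ) (α : σ →₀ ℕ) :
    MvPowerSeries.coeff α (ofCoeffs u i) = u (i, α) := rfl

theorem ofCoeffs_coeff (y : τ → MvPowerSeries σ R) :
    ofCoeffs (fun p => MvPowerSeries.coeff p.2 (y p.1)) = y := rfl

noncomputable def coeffPoly (f : MvPolynomial τ (MvPowerSeries σ R)) (α : σ →₀ ℕ) :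
    MvPolynomial (τ × (σ →₀ ℕ)) R :=
  MvPowerSeries.coeff α (eval₂ (MvPowerSeries.map C) (ofCoeffs X) f)

theorem eval_coeffPoly (u : τ × (σ →₀ ℕ) → R) (f : MvPolynomial τ (MvPowerSeries σ R))
    (α : σ →₀ ℕ) :
    eval u (coeffPoly f α) = MvPowerSeries.coeff α (eval (ofCoeffs u) f) := by
  have hC : (MvPowerSeries.map (eval u)).comp (MvPowerSeries.map (σ := σ) C) = RingHom.id _ := by
    rw [← MvPowerSeries.map_comp, ← MvPowerSeries.map_id]
    congr 1
    ext; simp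
  have hX : MvPowerSeries.map (eval u) ∘ ofCoeffs X = ofCoeffs (σ := σ) u := by
    funext i; ext α; simp [coeff_ofCoeffs]
  rw [coeffPoly, ← MvPowerSeries.coeff_map, eval₂_comp_left, hC, hX, eval₂_id]

end CoeffPoly

section System

variable {K : Type*} [Field K] {n m r : ℕ} (J : Fin m → Set (Fin n))
  (f : Fin r → MvPolynomial (Fin m) (MvPowerSeries (Fin n) K)) (c : Fin m → ℕ)

/-- `inl (i, α)` stands for the coefficient of `x^α` in `yᵢ`; the `inr (i, α)` are auxiliary
unknowns `z` with `∑_{|α| = cᵢ} z_{i,α} y_{i,α} = 1`, which says that `ord yᵢ ≤ cᵢ`. -/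
abbrev Var (n m : ℕ) := (Fin m × (Fin n →₀ ℕ)) ⊕ (Fin m × (Fin n →₀ ℕ))

abbrev Eqn (n m r : ℕ) := (Fin m × (Fin n →₀ ℕ)) ⊕ Fin m ⊕ (Fin r × (Fin n →₀ ℕ))

open Classical in
noncomputable def system : Eqn n m r → MvPolynomial (Var n m) K
  | .inl (i, α) => if ¬ ↑α.support ⊆ J i ∨ ∑ j, α j < c i then X (.inl (i, α)) else 0
  | .inr (.inl i) =>
      ∑ α ∈ Finset.univ.finsuppAntidiag (c i), X (.inr (i, α)) * X (.inl (i, α)) - 1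
  | .inr (.inr (k, α)) => rename Sum.inl (coeffPoly (f k) α)

def weight : Eqn n m r → ℕ
  | .inr (.inr (_, α)) => ∑ j, α j
  | _ => 0

theorem eval_system_coeff (u : Var n m → K) (k : Fin r) (α : Fin n →₀ ℕ) :
    eval u (system J f c (.inr (.inr (k, α))))
      = MvPowerSeries.coeff α (eval (ofCoeffs (u ∘ Sum.inl)) (f k)) := by
  rw [system, eval_rename, eval_coeffPoly]

theorem solution_of_eval_system_eq_zero (u : Var n m → K)
    (hu : ∀ e, eval u (system J f c e) = 0) :
    (∀ i, DependsOnVars (J i) (ofCoeffs (u ∘ Sum.inl) i)) ∧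
      (∀ k, eval (ofCoeffs (u ∘ Sum.inl)) (f k) = 0) ∧
      (∀ i, OrdEq (ofCoeffs (u ∘ Sum.inl) i) (c i)) := by
  have hvanish (i : Fin m) (α : Fin n →₀ ℕ) (h : ¬ ↑α.support ⊆ J i ∨ ∑ j, α j < c i) :
      u (.inl (i, α)) = 0 := by
    simpa [system, h] using hu (.inl (i, α))
  refine ⟨fun i α hα => hvanish i α (.inl hα), fun k => ?_, fun i => ?_⟩
  · ext α
    rw [← eval_system_coeff, hu, map_zero]
  · refine ordEq_iff.2 ⟨fun α hα => hvanish i α (.inr hα), ?_⟩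
    have hsum := hu (.inr (.inl i))
    simp only [system, map_sub, map_sum, map_mul, eval_X, map_one, sub_eq_zero] at hsum
    obtain ⟨α, hα, hne⟩ := Finset.exists_ne_zero_of_sum_ne_zero (hsum ▸ one_ne_zero)
    exact ⟨α, by simpa using hα, right_ne_zero_of_mul hne⟩

theorem exists_eval_system_eq_zero_of_approx (N : ℕ) (y : Fin m → MvPowerSeries (Fin n) K)
    (hJ : ∀ i, DependsOnVars (J i) (y i)) (hord : ∀ i, OrdEq (y i) (c i))
    (happrox : ∀ k, OrdGE (eval y (f k)) N) :
    ∃ u : Var n m → K, ∀ e, weight e < N → eval u (system J f c e) = 0 := by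
  classical
  choose hge A hA hne using fun i => ordEq_iff.1 (hord i)
  let u : Var n m → K := Sum.elim (fun p => MvPowerSeries.coeff p.2 (y p.1))
    (fun p => if p.2 = A p.1 then (MvPowerSeries.coeff (A p.1) (y p.1))⁻¹ else 0)
  have hy : ofCoeffs (u ∘ Sum.inl) = y := ofCoeffs_coeff y
  refine ⟨u, ?_⟩
  rintro (⟨i, α⟩ | i | ⟨k, α⟩) hw
  · by_cases h : ¬ ↑α.support ⊆ J i ∨ ∑ j, α j < c i
    · simp only [system, if_pos h, eval_X]
      exact h.elim (hJ i α) (hge i α)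
    · simp [system, h]
  · simp only [system, map_sub, map_sum, map_mul, eval_X, map_one, sub_eq_zero]
    rw [Finset.sum_eq_single (A i)]
    · simpa [u] using inv_mul_cancel₀ (hne i)
    · intro β _ hβ
      simp [u, hβ]
    · simp [hA i]
  · rw [eval_system_coeff, hy]
    exact happrox k α hw

end System

end StrongApproximation

/-- Strong approximation with constraints over an ℵ₀-complete field: there is a function
`ν : ℕ^m → ℕ` such that any approximate solution modulo `(x)^{ν(c)}` with constraints and
prescribed orders `c` gives rise to an exact solution with the same constraints and orders. -/
theorem strong_approximation_with_constraints {K : Type*} [Field K] (hK : Aleph0Complete K)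
    (n m r : ℕ) (f : Fin r → MvPolynomial (Fin m) (MvPowerSeries (Fin n) K))
    (J : Fin m → Set (Fin n)) :
    ∃ ν : (Fin m → ℕ) → ℕ, ∀ (c : Fin m → ℕ) (y' : Fin m → MvPowerSeries (Fin n) K),
      (∀ i, DependsOnVars (J i) (y' i)) →
      (∀ i, OrdEq (y' i) (c i)) →
      (∀ k, OrdGE (MvPolynomial.eval y' (f k)) (ν c)) →
      ∃ y : Fin m → MvPowerSeries (Fin n) K,
        (∀ i, DependsOnVars (J i) (y i)) ∧
        (∀ k, MvPolynomial.eval y (f k) = 0) ∧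
        (∀ i, OrdEq (y i) (c i)) := by
  open StrongApproximation in
  choose ν hν using fun c => hK.exists_level_solvable_imp_solvable (system J f c) weight
  refine ⟨ν, fun c y' hJ hord happrox => ?_⟩
  obtain ⟨u, hu⟩ := hν c (exists_eval_system_eq_zero_of_approx J f c _ y' hJ hord happrox)
  exact ⟨_, solution_of_eval_system_eq_zero J f c u hu⟩
end
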